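/- arXiv:1103.0192 — 4 statements merged into one kernel-verified Lean document; each statement's English description precedes it below -/
import Mathlib

section
/- Let C > 0 and let t, x₁, x₄ be real numbers with t < x₁ < 1 < x₄. Then ∫_t^{x₁} dx / ((1−x)·√(C(x−x₁)(x−x₄))) = (1/√(C(x₄−1)(1−x₁))) · (π/2 − arctan((x₁ + x₄ − 2x₁x₄ + (x₁ + x₄ − 2)t) / (2√((x₁−t)(x₄−t)(x₄−1)(1−x₁))))). -/
/-!
Write `N y = x₁ + x₄ - 2 x₁ x₄ + (x₁ + x₄ - 2) y` and `P y = (x₁ - y)(x₄ - y)(x₄ - 1)(1 - x₁)`.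
The polynomial identity `N² + 4P = ((x₄ - x₁)(1 - y))²` says that
`s = N / ((x₄ - x₁)(1 - y))` satisfies `1 - s² = (2√P / ((x₄ - x₁)(1 - y)))²`. Hence
`arcsin (s y) = arctan (N / (2√P))` for `y < x₁`, and `arcsin ∘ s / √(C (x₄ - 1)(1 - x₁))` is a
primitive of the integrand. Unlike the arctan form, it stays continuous up to the singular
endpoint, where `s x₁ = 1`, so the improper integral is an ordinary FTC; integrability comes for
free because the integrand is nonnegative.
-/

open Real Set intervalIntegral

noncomputable def alpha3Sine (x₁ x₄ y : ℝ) : ℝ :=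
  (x₁ + x₄ - 2 * x₁ * x₄ + (x₁ + x₄ - 2) * y) / ((x₄ - x₁) * (1 - y))

lemma alpha3_numerator_sq_add (x₁ x₄ y : ℝ) :
    (x₁ + x₄ - 2 * x₁ * x₄ + (x₁ + x₄ - 2) * y) ^ 2 +
        4 * ((x₁ - y) * (x₄ - y) * (x₄ - 1) * (1 - x₁)) = ((x₄ - x₁) * (1 - y)) ^ 2 := by
  ring

section

variable {x₁ x₄ : ℝ}

lemma alpha3Sine_self (hx1 : x₁ < 1) (hx4 : 1 < x₄) : alpha3Sine x₁ x₄ x₁ = 1 := by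
  have : (x₄ - x₁) * (1 - x₁) ≠ 0 := mul_ne_zero (by linarith) (by linarith)
  rw [alpha3Sine, div_eq_one_iff_eq this]
  ring

lemma one_sub_alpha3Sine_sq {y : ℝ} (hx : x₁ ≠ x₄) (hy : y ≠ 1)
    (hPQ : 0 ≤ (x₁ - y) * (x₄ - y) * (x₄ - 1) * (1 - x₁)) :
    1 - alpha3Sine x₁ x₄ y ^ 2 =
      (2 * √((x₁ - y) * (x₄ - y) * (x₄ - 1) * (1 - x₁)) / ((x₄ - x₁) * (1 - y))) ^ 2 := by
  have hx' : x₄ - x₁ ≠ 0 := sub_ne_zero.2 hx.symm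
  have hy' : 1 - y ≠ 0 := sub_ne_zero.2 hy.symm
  rw [div_pow, mul_pow, sq_sqrt hPQ, alpha3Sine]
  field_simp
  linear_combination alpha3_numerator_sq_add x₁ x₄ y

lemma hasDerivAt_alpha3Sine {y : ℝ} (hx : x₁ ≠ x₄) (hy : y ≠ 1) :
    HasDerivAt (alpha3Sine x₁ x₄)
      (2 * ((x₄ - 1) * (1 - x₁)) / ((x₄ - x₁) * (1 - y) ^ 2)) y := by
  have hx' : x₄ - x₁ ≠ 0 := sub_ne_zero.2 hx.symm
  have hy' : 1 - y ≠ 0 := sub_ne_zero.2 hy.symm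
  have hnum : HasDerivAt (fun z => x₁ + x₄ - 2 * x₁ * x₄ + (x₁ + x₄ - 2) * z) (x₁ + x₄ - 2) y :=
    by simpa using ((hasDerivAt_id y).const_mul (x₁ + x₄ - 2)).const_add (x₁ + x₄ - 2 * x₁ * x₄)
  have hden : HasDerivAt (fun z => (x₄ - x₁) * (1 - z)) (-(x₄ - x₁)) y := by
    simpa using ((hasDerivAt_id y).const_sub 1).const_mul (x₄ - x₁)
  refine (hnum.div hden (mul_ne_zero hx' hy')).congr_deriv ?_
  field_simp
  ring

lemma sqrt_one_sub_alpha3Sine_sq {y : ℝ} (hx1 : x₁ < 1) (hx4 : 1 < x₄) (hy : y ≤ x₁) :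
    √(1 - alpha3Sine x₁ x₄ y ^ 2) =
      2 * √((x₁ - y) * (x₄ - y) * (x₄ - 1) * (1 - x₁)) / ((x₄ - x₁) * (1 - y)) := by
  have hPQ : 0 ≤ (x₁ - y) * (x₄ - y) * (x₄ - 1) * (1 - x₁) :=
    mul_nonneg (mul_nonneg (mul_nonneg (by linarith) (by linarith)) (by linarith)) (by linarith)
  rw [one_sub_alpha3Sine_sq (by linarith) (by linarith) hPQ, sqrt_sq]
  exact div_nonneg (by positivity) (mul_nonneg (by linarith) (by linarith))

lemma alpha3Sine_mem_Ioo {y : ℝ} (hx1 : x₁ < 1) (hx4 : 1 < x₄) (hy : y < x₁) :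
    alpha3Sine x₁ x₄ y ∈ Ioo (-1) 1 := by
  have hPQ : 0 < (x₁ - y) * (x₄ - y) * (x₄ - 1) * (1 - x₁) :=
    mul_pos (mul_pos (mul_pos (by linarith) (by linarith)) (by linarith)) (by linarith)
  have h : 0 < √(1 - alpha3Sine x₁ x₄ y ^ 2) := by
    rw [sqrt_one_sub_alpha3Sine_sq hx1 hx4 hy.le]
    exact div_pos (by positivity) (mul_pos (by linarith) (by linarith))
  rw [sqrt_pos, sub_pos, sq_lt_one_iff_abs_lt_one] at h
  exact abs_lt.mp h

lemma arcsin_alpha3Sine {y : ℝ} (hx1 : x₁ < 1) (hx4 : 1 < x₄) (hy : y < x₁) :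
    arcsin (alpha3Sine x₁ x₄ y) = arctan ((x₁ + x₄ - 2 * x₁ * x₄ + (x₁ + x₄ - 2) * y) /
      (2 * √((x₁ - y) * (x₄ - y) * (x₄ - 1) * (1 - x₁)))) := by
  have hc : x₄ - x₁ ≠ 0 := by linarith
  have hw : 1 - y ≠ 0 := by linarith
  rw [arcsin_eq_arctan (alpha3Sine_mem_Ioo hx1 hx4 hy), sqrt_one_sub_alpha3Sine_sq hx1 hx4 hy.le,
    alpha3Sine, div_div_div_cancel_right₀ (mul_ne_zero hc hw)]

lemma hasDerivAt_arcsin_alpha3Sine {C y : ℝ} (hC : 0 < C) (hx1 : x₁ < 1) (hx4 : 1 < x₄)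
    (hy : y < x₁) :
    HasDerivAt (fun z => 1 / √(C * (x₄ - 1) * (1 - x₁)) * arcsin (alpha3Sine x₁ x₄ z))
      (1 / ((1 - y) * √(C * (y - x₁) * (y - x₄)))) y := by
  have hmem := alpha3Sine_mem_Ioo hx1 hx4 hy
  refine (((hasDerivAt_arcsin hmem.1.ne' hmem.2.ne).comp y
    (hasDerivAt_alpha3Sine (by linarith) (by linarith))).const_mul _).congr_deriv ?_
  have hP : 0 < (x₁ - y) * (x₄ - y) := mul_pos (by linarith) (by linarith)
  have hQ : 0 < (x₄ - 1) * (1 - x₁) := mul_pos (by linarith) (by linarith)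
  rw [sqrt_one_sub_alpha3Sine_sq hx1 hx4 hy.le,
    show C * (y - x₁) * (y - x₄) = C * ((x₁ - y) * (x₄ - y)) by ring,
    show C * (x₄ - 1) * (1 - x₁) = C * ((x₄ - 1) * (1 - x₁)) by ring,
    show (x₁ - y) * (x₄ - y) * (x₄ - 1) * (1 - x₁) = (x₁ - y) * (x₄ - y) * ((x₄ - 1) * (1 - x₁))
      by ring, sqrt_mul hC.le, sqrt_mul hC.le, sqrt_mul hP.le]
  have hc : x₄ - x₁ ≠ 0 := by linarith
  have hw : 1 - y ≠ 0 := by linarith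
  have hq := sq_sqrt hQ.le
  have hsqrtQ : 0 < √((x₄ - 1) * (1 - x₁)) := sqrt_pos.2 hQ
  have hsqrtP : 0 < √((x₁ - y) * (x₄ - y)) := sqrt_pos.2 hP
  have hsqrtC : 0 < √C := sqrt_pos.2 hC
  field_simp
  exact hq.symm

lemma continuousOn_alpha3Sine (hx1 : x₁ < 1) (hx4 : 1 < x₄) :
    ContinuousOn (alpha3Sine x₁ x₄) (Iic x₁) :=
  ContinuousOn.div (by fun_prop) (by fun_prop) fun y hy =>
    mul_ne_zero (by linarith) (by linarith [mem_Iic.mp hy])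

end

/-- closed form of the improper integral
`∫_t^{x₁} dx / ((1-x) √(C (x-x₁)(x-x₄)))` for `t < x₁ < 1 < x₄` and `C > 0`. -/
theorem integral_alpha3_closed_form (C t x₁ x₄ : ℝ)
    (hC : 0 < C) (htx : t < x₁) (hx1 : x₁ < 1) (hx4 : 1 < x₄) :
    ∫ x in t..x₁, 1 / ((1 - x) * Real.sqrt (C * (x - x₁) * (x - x₄))) =
      (1 / Real.sqrt (C * (x₄ - 1) * (1 - x₁))) *
        (π / 2 - Real.arctan ((x₁ + x₄ - 2 * x₁ * x₄ + (x₁ + x₄ - 2) * t) /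
          (2 * Real.sqrt ((x₁ - t) * (x₄ - t) * (x₄ - 1) * (1 - x₁))))) := by
  set F : ℝ → ℝ := fun y => 1 / √(C * (x₄ - 1) * (1 - x₁)) * arcsin (alpha3Sine x₁ x₄ y)
  have hcont : ContinuousOn F (Icc t x₁) :=
    continuousOn_const.mul (continuous_arcsin.comp_continuousOn
        ((continuousOn_alpha3Sine hx1 hx4).mono Icc_subset_Iic_self))
  have hderiv : ∀ y ∈ Ioo t x₁, HasDerivAt F (1 / ((1 - y) * √(C * (y - x₁) * (y - x₄)))) y :=
    fun y hy => hasDerivAt_arcsin_alpha3Sine hC hx1 hx4 hy.2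
  have hnonneg : ∀ y ∈ Ioo t x₁, 0 ≤ 1 / ((1 - y) * √(C * (y - x₁) * (y - x₄))) :=
    fun y hy => one_div_nonneg.2 (mul_nonneg (by linarith [hy.2]) (sqrt_nonneg _))
  rw [integral_eq_sub_of_hasDerivAt_of_le htx.le hcont hderiv
    ((intervalIntegrable_iff_integrableOn_Ioc_of_le htx.le).2
      (integrableOn_deriv_of_nonneg hcont hderiv hnonneg))]
  simp only [F, alpha3Sine_self hx1 hx4, arcsin_one, arcsin_alpha3Sine hx1 hx4 htx]
  ring
end

section
/- Let C > 0 and let t, x₁, x₄ be real numbers with t < x₁ < 1 < x₄. Define α₂ = π/√(C(x₄−1)(1−x₁)), α₃ = ∫_t^{x₁} dx/((1−x)·√(C(x−x₁)(x−x₄))), and Λ = (x₁ + x₄ − 2x₁x₄ + (x₁ + x₄ − 2)t) / (2√((x₁−t)(x₄−t)(1−x₁)(x₄−1))). Then α₃/α₂ = 1/2 − arctan(Λ)/π. -/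
/-!
For `a < c < b` and `x < a`, the integrand `1 / ((c - x) √(C (x - a)(x - b)))` has the
elementary antiderivative
`-(2 / (√C √(c - a) √(b - c))) · arctan (√(b - c) √(a - x) / (√(c - a) √(b - x)))`,
which vanishes at `x = a`. With `(a, b, c) = (x₁, x₄, 1)` this gives `α₃ / α₂ = 2 arctan v / π`
for `v = √((x₄ - 1)(x₁ - t) / ((1 - x₁)(x₄ - t)))`, and `Λ = (1 - v²) / (2v) = cot (2 arctan v)`,
so `arctan Λ = π / 2 - 2 arctan v`.
-/

open Real Set

theorem arctan_one_sub_sq_div_two_mul {v : ℝ} (hv : 0 < v) :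
    arctan ((1 - v ^ 2) / (2 * v)) = π / 2 - 2 * arctan v := by
  have htan : tan (π / 2 - 2 * arctan v) = (1 - v ^ 2) / (2 * v) := by
    rw [tan_pi_div_two_sub, tan_two_mul, tan_arctan, inv_div]
  have hpos : 0 < arctan v := by simpa using arctan_strictMono hv
  rw [← htan, arctan_tan] <;> linarith [arctan_lt_pi_div_two v, pi_pos]

noncomputable def poleAntideriv (C a b c y : ℝ) : ℝ :=
  -(2 / (√C * √(c - a) * √(b - c))) * arctan (√(b - c) * √(a - y) / (√(c - a) * √(b - y)))

section

variable {C a b c : ℝ}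

theorem hasDerivAt_poleAntideriv (hC : 0 < C) (hac : a < c) (hcb : c < b) {x : ℝ}
    (hxa : x < a) :
    HasDerivAt (poleAntideriv C a b c) (1 / ((c - x) * √(C * (x - a) * (x - b)))) x := by
  have hxb : x < b := by linarith
  have hsqrt_sub {d : ℝ} (hxd : x < d) :
      HasDerivAt (fun y => √(d - y)) (-1 / (2 * √(d - x))) x := by
    simpa using ((hasDerivAt_id x).const_sub d).sqrt (sub_pos.2 hxd).ne'
  set m := √(c - a)
  set n := √(b - c)
  set p := √(a - x) with hp_def
  set q := √(b - x) with hq_def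
  have hm : 0 < m := sqrt_pos.2 (by linarith)
  have hn : 0 < n := sqrt_pos.2 (by linarith)
  have hp : 0 < p := sqrt_pos.2 (by linarith)
  have hq : 0 < q := sqrt_pos.2 (by linarith)
  have hquot := ((hsqrt_sub hxa).const_mul n).div ((hsqrt_sub hxb).const_mul m)
    (by positivity)
  refine ((hquot.arctan).const_mul (-(2 / (√C * m * n)))).congr_deriv ?_
  have hq2 : q ^ 2 = m ^ 2 + n ^ 2 + p ^ 2 := by
    simp only [m, n, p, q, sq_sqrt, sub_nonneg, hac.le, hcb.le, hxa.le, hxb.le]; ring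
  have hcx : c - x = m ^ 2 + p ^ 2 := by
    simp only [m, p, sq_sqrt, sub_nonneg, hac.le, hxa.le]; ring
  have hroot : √(C * (x - a) * (x - b)) = √C * p * q := by
    rw [show C * (x - a) * (x - b) = C * (a - x) * (b - x) by ring,
      sqrt_mul (by positivity), sqrt_mul hC.le]
  simp only [Pi.div_apply, ← hp_def, ← hq_def, hroot, hcx]
  field_simp
  linear_combination p ^ 2 * hq2

theorem integral_one_div_sub_mul_sqrt {t : ℝ} (hC : 0 < C) (hta : t < a) (hac : a < c)
    (hcb : c < b) :
    ∫ x in t..a, 1 / ((c - x) * √(C * (x - a) * (x - b))) =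
      2 / (√C * √(c - a) * √(b - c)) * arctan (√(b - c) * √(a - t) / (√(c - a) * √(b - t))) := by
  have hcont : ContinuousOn (poleAntideriv C a b c) (Icc t a) := by
    refine continuousOn_const.mul (continuous_arctan.comp_continuousOn
      (ContinuousOn.div (by fun_prop) (by fun_prop) fun y hy => ?_))
    have : 0 < c - a := sub_pos.2 hac
    have : 0 < b - y := by linarith [hy.2]
    positivity
  have hderiv : ∀ x ∈ Ioo t a, HasDerivAt (poleAntideriv C a b c)
      (1 / ((c - x) * √(C * (x - a) * (x - b)))) x :=
    fun x hx => hasDerivAt_poleAntideriv hC hac hcb hx.2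
  have hnonneg : ∀ x ∈ Ioo t a, 0 ≤ 1 / ((c - x) * √(C * (x - a) * (x - b))) := by
    intro x hx
    have : 0 < c - x := by linarith [hx.2]
    positivity
  rw [intervalIntegral.integral_eq_sub_of_hasDerivAt_of_le hta.le hcont hderiv
    ((intervalIntegrable_iff_integrableOn_Ioc_of_le hta.le).2
      (intervalIntegral.integrableOn_deriv_of_nonneg hcont hderiv hnonneg))]
  simp [poleAntideriv]

end

/-- with `α₂ = π/√(C(x₄-1)(1-x₁))`,
`α₃ = ∫_t^{x₁} dx/((1-x)√(C(x-x₁)(x-x₄)))` and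
`Λ = (x₁+x₄-2x₁x₄+(x₁+x₄-2)t)/(2√((x₁-t)(x₄-t)(1-x₁)(x₄-1)))`,
one has `α₃/α₂ = 1/2 - arctan Λ / π`. -/
theorem ratio_alpha3_alpha2 (C t x₁ x₄ : ℝ)
    (hC : 0 < C) (htx : t < x₁) (hx1 : x₁ < 1) (hx4 : 1 < x₄) :
    (∫ x in t..x₁, 1 / ((1 - x) * Real.sqrt (C * (x - x₁) * (x - x₄)))) /
        (π / Real.sqrt (C * (x₄ - 1) * (1 - x₁))) =
      1 / 2 - Real.arctan ((x₁ + x₄ - 2 * x₁ * x₄ + (x₁ + x₄ - 2) * t) /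
        (2 * Real.sqrt ((x₁ - t) * (x₄ - t) * (1 - x₁) * (x₄ - 1)))) / π := by
  have h1 : 0 < 1 - x₁ := by linarith
  have h4 : 0 < x₄ - 1 := by linarith
  have ht1 : 0 < x₁ - t := by linarith
  have ht4 : 0 < x₄ - t := by linarith
  set v := √(x₄ - 1) * √(x₁ - t) / (√(1 - x₁) * √(x₄ - t)) with hv
  have hΛ : (x₁ + x₄ - 2 * x₁ * x₄ + (x₁ + x₄ - 2) * t) /
      (2 * √((x₁ - t) * (x₄ - t) * (1 - x₁) * (x₄ - 1))) = (1 - v ^ 2) / (2 * v) := by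
    rw [sqrt_mul (by positivity), sqrt_mul (by positivity), sqrt_mul ht1.le, hv]
    field_simp
    rw [sq_sqrt h1.le, sq_sqrt h4.le, sq_sqrt ht1.le, sq_sqrt ht4.le]
    ring
  rw [integral_one_div_sub_mul_sqrt hC htx hx1 hx4, ← hv, hΛ,
    arctan_one_sub_sq_div_two_mul (by positivity), sqrt_mul (by positivity), sqrt_mul hC.le]
  field_simp
  ring
end

section
/- Assume Σ_{i,j} p_{i,j} = 1 and that the drift is zero, i.e., Σ_{i,j} i·p_{i,j} = 0 and Σ_{i,j} j·p_{i,j} = 0. Let X be a ℂ-valued function defined and differentiable on an open neighborhood of 1 in ℂ such that X(1) = 1 and K(X(y), y) = 0 for all y in this neighborhood. Then ã(1)·X′(1)² + (Σ_{i,j} ij·p_{i,j})·X′(1) + a(1) = 0. -/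
/-- The kernel `K(x,y) = a(x) y² + b(x) y + c(x)` as a function on `ℂ × ℂ`. -/
noncomputable def kernelFun (p : ℤ → ℤ → ℝ) (x y : ℂ) : ℂ :=
  ((p 1 1 : ℂ) * x ^ 2 + (p 0 1 : ℂ) * x + (p (-1) 1 : ℂ)) * y ^ 2 +
  ((p 1 0 : ℂ) * x ^ 2 + ((p 0 0 : ℂ) - 1) * x + (p (-1) 0 : ℂ)) * y +
  ((p 1 (-1) : ℂ) * x ^ 2 + (p 0 (-1) : ℂ) * x + (p (-1) (-1) : ℂ))

/-!
Along a branch through `(1, 1)` write `X(1 + v) = 1 + s v`, where `s` is the slope of `X` at `1`.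
For a walk of total mass one and zero drift, `K(1,1)` and both partial derivatives of `K` at
`(1,1)` vanish, so `K(1 + s v, 1 + v) = v² Q(s, v)` with `Q` polynomial and
`Q(s, 0) = ã(1) s² + (Σ ij p_{i,j}) s + a(1)`. On the branch `Q(s, v) = 0` for `v ≠ 0`, and letting
`v → 0` the slope tends to `X'(1)`.
-/

open Filter Topology

theorem Finset.sum_Icc_neg_one_one {M : Type*} [AddCommMonoid M] (f : ℤ → M) :
    ∑ i ∈ Finset.Icc (-1 : ℤ) 1, f i = f (-1) + f 0 + f 1 := by
  rw [show Finset.Icc (-1 : ℤ) 1 = {-1, 0, 1} by decide]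
  simp [add_assoc]

/-- `K(1 + s v, 1 + v) / v²` for a walk of total mass one and zero drift. -/
noncomputable def kernelSlopeQuotient (p : ℤ → ℤ → ℝ) (s v : ℂ) : ℂ :=
  ((p 1 1 + p 1 0 + p 1 (-1) : ℝ) : ℂ) * s ^ 2 +
    ((p (-1) (-1) - p (-1) 1 - p 1 (-1) + p 1 1 : ℝ) : ℂ) * s +
    ((p 1 1 + p 0 1 + p (-1) 1 : ℝ) : ℂ) +
    v * (((2 * p 1 1 + p 1 0 : ℝ) : ℂ) * s ^ 2 + ((2 * p 1 1 + p 0 1 : ℝ) : ℂ) * s) +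
    v ^ 2 * ((p 1 1 : ℂ) * s ^ 2)

theorem continuous_uncurry_kernelSlopeQuotient (p : ℤ → ℤ → ℝ) :
    Continuous (Function.uncurry (kernelSlopeQuotient p)) := by
  unfold kernelSlopeQuotient
  fun_prop

theorem kernelFun_one_add_mul (p : ℤ → ℤ → ℝ)
    (hsum : ∑ i ∈ Finset.Icc (-1 : ℤ) 1, ∑ j ∈ Finset.Icc (-1 : ℤ) 1, p i j = 1)
    (hdx : ∑ i ∈ Finset.Icc (-1 : ℤ) 1, ∑ j ∈ Finset.Icc (-1 : ℤ) 1, (i : ℝ) * p i j = 0)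
    (hdy : ∑ i ∈ Finset.Icc (-1 : ℤ) 1, ∑ j ∈ Finset.Icc (-1 : ℤ) 1, (j : ℝ) * p i j = 0)
    (s v : ℂ) :
    kernelFun p (1 + s * v) (1 + v) = v ^ 2 * kernelSlopeQuotient p s v := by
  simp only [Finset.sum_Icc_neg_one_one] at hsum hdx hdy
  have hsum' := congrArg Complex.ofReal hsum
  have hdx' := congrArg Complex.ofReal hdx
  have hdy' := congrArg Complex.ofReal hdy
  push_cast at hsum' hdx' hdy'
  simp only [kernelFun, kernelSlopeQuotient]
  push_cast
  linear_combination (1 + v + s * v + s * v ^ 2) * hsum' + (s * v + s * v ^ 2) * hdx' +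
    (v + s * v ^ 2) * hdy'

theorem eq_zero_of_eventually_slope_eq_zero {𝕜 : Type*} [NontriviallyNormedField 𝕜]
    {f : 𝕜 → 𝕜} {a d : 𝕜} (hf : HasDerivAt f d a) {Q : 𝕜 → 𝕜 → 𝕜}
    (hQ : ContinuousAt (Function.uncurry Q) (d, 0))
    (h : ∀ᶠ y in 𝓝[≠] a, Q (slope f a y) (y - a) = 0) : Q d 0 = 0 := by
  have hv : Tendsto (fun y => y - a) (𝓝[≠] a) (𝓝 0) := by
    simpa using (tendsto_nhdsWithin_of_tendsto_nhds (tendsto_id (x := 𝓝 a))).sub_const a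
  have hlim : Tendsto (fun y => Q (slope f a y) (y - a)) (𝓝[≠] a) (𝓝 (Q d 0)) :=
    hQ.tendsto.comp ((hasDerivAt_iff_tendsto_slope.mp hf).prodMk_nhds hv)
  exact tendsto_nhds_unique hlim (tendsto_const_nhds.congr' (EventuallyEq.symm h))

theorem derivative_branch_quadratic_general (p : ℤ → ℤ → ℝ)
    (hsum : ∑ i ∈ Finset.Icc (-1 : ℤ) 1, ∑ j ∈ Finset.Icc (-1 : ℤ) 1, p i j = 1)
    (hdx : ∑ i ∈ Finset.Icc (-1 : ℤ) 1, ∑ j ∈ Finset.Icc (-1 : ℤ) 1, (i : ℝ) * p i j = 0)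
    (hdy : ∑ i ∈ Finset.Icc (-1 : ℤ) 1, ∑ j ∈ Finset.Icc (-1 : ℤ) 1, (j : ℝ) * p i j = 0)
    (X : ℂ → ℂ) (U : Set ℂ) (hU : IsOpen U) (h1U : (1 : ℂ) ∈ U)
    (hdiff : ∀ y ∈ U, DifferentiableAt ℂ X y)
    (hX1 : X 1 = 1)
    (hK : ∀ y ∈ U, kernelFun p (X y) y = 0) :
    ((p 1 1 + p 1 0 + p 1 (-1) : ℝ) : ℂ) * (deriv X 1) ^ 2 +
      ((∑ i ∈ Finset.Icc (-1 : ℤ) 1, ∑ j ∈ Finset.Icc (-1 : ℤ) 1,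
          (i : ℝ) * (j : ℝ) * p i j : ℝ) : ℂ) * deriv X 1 +
      ((p 1 1 + p 0 1 + p (-1) 1 : ℝ) : ℂ) = 0 := by
  have hbranch : ∀ᶠ y in 𝓝[≠] (1 : ℂ), kernelSlopeQuotient p (slope X 1 y) (y - 1) = 0 := by
    filter_upwards [eventually_nhdsWithin_of_eventually_nhds (hU.eventually_mem h1U),
      self_mem_nhdsWithin] with y hyU hy1
    have hy : y - 1 ≠ 0 := sub_ne_zero.mpr hy1
    have hXy : 1 + slope X 1 y * (y - 1) = X y := by
      rw [slope_def_field, hX1]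
      field_simp
      ring
    have := kernelFun_one_add_mul p hsum hdx hdy (slope X 1 y) (y - 1)
    rw [hXy, add_sub_cancel, hK y hyU] at this
    exact (mul_eq_zero.mp this.symm).resolve_left (pow_ne_zero 2 hy)
  have hQ := eq_zero_of_eventually_slope_eq_zero (hdiff 1 h1U).hasDerivAt
    (continuous_uncurry_kernelSlopeQuotient p).continuousAt hbranch
  simp only [kernelSlopeQuotient, Finset.sum_Icc_neg_one_one] at hQ ⊢
  push_cast at hQ ⊢
  linear_combination hQ

/-- for a zero-drift walk, if `X` is differentiable near `1`, `X(1) = 1` and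
`K(X(y), y) = 0` near `1`, then `ã(1) X'(1)² + (Σ ij p_{i,j}) X'(1) + a(1) = 0`. -/
theorem derivative_branch_quadratic (p : ℤ → ℤ → ℝ)
    (hpos : ∀ i j, 0 ≤ p i j)
    (hsum : ∑ i ∈ Finset.Icc (-1 : ℤ) 1, ∑ j ∈ Finset.Icc (-1 : ℤ) 1, p i j = 1)
    (hdx : ∑ i ∈ Finset.Icc (-1 : ℤ) 1, ∑ j ∈ Finset.Icc (-1 : ℤ) 1, (i : ℝ) * p i j = 0)
    (hdy : ∑ i ∈ Finset.Icc (-1 : ℤ) 1, ∑ j ∈ Finset.Icc (-1 : ℤ) 1, (j : ℝ) * p i j = 0)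
    (X : ℂ → ℂ) (U : Set ℂ) (hU : IsOpen U) (h1U : (1 : ℂ) ∈ U)
    (hdiff : ∀ y ∈ U, DifferentiableAt ℂ X y)
    (hX1 : X 1 = 1)
    (hK : ∀ y ∈ U, kernelFun p (X y) y = 0) :
    ((p 1 1 + p 1 0 + p 1 (-1) : ℝ) : ℂ) * (deriv X 1) ^ 2 +
      ((∑ i ∈ Finset.Icc (-1 : ℤ) 1, ∑ j ∈ Finset.Icc (-1 : ℤ) 1,
          (i : ℝ) * (j : ℝ) * p i j : ℝ) : ℂ) * deriv X 1 +
      ((p 1 1 + p 0 1 + p (-1) 1 : ℝ) : ℂ) = 0 :=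
  derivative_branch_quadratic_general p hsum hdx hdy X U hU h1U hdiff hX1 hK
end

section
/- Fix C > 0 and real numbers x₁ < 1 < x₄. Then, as (x₂, x₃) tends to (1,1) subject to x₁ < x₂ < x₃ < x₄, the elliptic integral ∫_{x₂}^{x₃} dx / √(C(x−x₁)(x−x₂)(x₃−x)(x₄−x)) converges to π / √(C(x₄−1)(1−x₁)). -/
open Real Filter MeasureTheory intervalIntegral Set Topology

/-!
The integrand factors as `g(x) / √((x - x₂)(x₃ - x))` with `g(x) = (C(x - x₁)(x₄ - x))^(-1/2)`.
The weight `1 / √((x - x₂)(x₃ - x))` has integral `π` over `[x₂, x₃]` whatever `x₂ < x₃`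
(its antiderivative is `arcsin ((2x - x₂ - x₃) / (x₃ - x₂))`), while on `[x₂, x₃]` the factor `g`
lies between `(C(x₃ - x₁)(x₄ - x₂))^(-1/2)` and `(C(x₂ - x₁)(x₄ - x₃))^(-1/2)`. Both bounds tend to
`(C(1 - x₁)(x₄ - 1))^(-1/2)`, so the integral is squeezed to `π` times that value.
-/

section ArcsineIntegral

variable {a b x : ℝ}

theorem hasDerivAt_arcsin_affine (hx : x ∈ Ioo a b) :
    HasDerivAt (fun x => arcsin ((2 * x - (a + b)) / (b - a))) (√((x - a) * (b - x)))⁻¹ x := by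
  obtain ⟨hax, hxb⟩ := hx
  have hba : 0 < b - a := by linarith
  have hu₁ : (2 * x - (a + b)) / (b - a) ≠ -1 := by
    rw [ne_eq, div_eq_iff hba.ne']; linarith
  have hu₂ : (2 * x - (a + b)) / (b - a) ≠ 1 := by
    rw [ne_eq, div_eq_iff hba.ne']; linarith
  have hlin : HasDerivAt (fun x : ℝ => (2 * x - (a + b)) / (b - a)) (2 / (b - a)) x := by
    simpa using (((hasDerivAt_id x).const_mul 2).sub_const (a + b)).div_const (b - a)
  refine ((hasDerivAt_arcsin hu₁ hu₂).comp x hlin).congr_deriv ?_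
  have hsq : 1 - ((2 * x - (a + b)) / (b - a)) ^ 2 = (2 / (b - a)) ^ 2 * ((x - a) * (b - x)) := by
    field_simp; ring
  have hP : 0 < √((x - a) * (b - x)) := sqrt_pos.2 (by nlinarith)
  rw [hsq, sqrt_mul (by positivity), sqrt_sq (by positivity)]
  field_simp

theorem intervalIntegrable_inv_sqrt_mul_sub (hab : a < b) :
    IntervalIntegrable (fun x => (√((x - a) * (b - x)))⁻¹) volume a b := by
  refine intervalIntegrable_deriv_of_nonneg (g := fun x => arcsin ((2 * x - (a + b)) / (b - a)))
    (by fun_prop) (fun x hx => ?_) (fun x _ => by positivity)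
  rw [min_eq_left hab.le, max_eq_right hab.le] at hx
  exact hasDerivAt_arcsin_affine hx

theorem integral_inv_sqrt_mul_sub (hab : a < b) :
    ∫ x in a..b, (√((x - a) * (b - x)))⁻¹ = π := by
  have hba : b - a ≠ 0 := by linarith
  rw [integral_eq_sub_of_hasDerivAt_of_le hab.le (by fun_prop)
    (fun x hx => hasDerivAt_arcsin_affine hx) (intervalIntegrable_inv_sqrt_mul_sub hab)]
  have hb : (2 * b - (a + b)) / (b - a) = 1 := by field_simp; ring
  have ha : (2 * a - (a + b)) / (b - a) = -1 := by field_simp; ring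
  rw [hb, ha, arcsin_one, arcsin_neg_one]
  ring

theorem integral_mul_inv_sqrt_mul_sub_mem_Icc {g : ℝ → ℝ} {m M : ℝ} (hab : a < b)
    (hg : ContinuousOn g (Icc a b)) (hm : ∀ x ∈ Icc a b, m ≤ g x) (hM : ∀ x ∈ Icc a b, g x ≤ M) :
    ∫ x in a..b, g x * (√((x - a) * (b - x)))⁻¹ ∈ Icc (m * π) (M * π) := by
  have hφ := intervalIntegrable_inv_sqrt_mul_sub hab
  have hgφ : IntervalIntegrable (fun x => g x * (√((x - a) * (b - x)))⁻¹) volume a b :=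
    hφ.continuousOn_mul (by rwa [uIcc_of_le hab.le])
  rw [← integral_inv_sqrt_mul_sub hab, ← intervalIntegral.integral_const_mul,
    ← intervalIntegral.integral_const_mul]
  exact ⟨integral_mono_on hab.le (hφ.const_mul m) hgφ
      fun x hx => mul_le_mul_of_nonneg_right (hm x hx) (by positivity),
    integral_mono_on hab.le hgφ (hφ.const_mul M)
      fun x hx => mul_le_mul_of_nonneg_right (hM x hx) (by positivity)⟩

end ArcsineIntegral

section QuarticPeriod

variable {C x₁ x₄ a b x : ℝ}

theorem inv_sqrt_quartic_eq_mul (hC : 0 < C) (hx : x ∈ Icc x₁ x₄) :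
    1 / √(C * (x - x₁) * (x - a) * (b - x) * (x₄ - x)) =
      (√(C * (x - x₁) * (x₄ - x)))⁻¹ * (√((x - a) * (b - x)))⁻¹ := by
  have : 0 ≤ C * (x - x₁) * (x₄ - x) :=
    mul_nonneg (mul_nonneg hC.le (by linarith [hx.1])) (by linarith [hx.2])
  rw [one_div, ← mul_inv, ← sqrt_mul this]
  congr 2
  ring

theorem inv_sqrt_quadratic_mem_Icc (hC : 0 < C) (h₁ : x₁ < a) (h₄ : b < x₄) (hx : x ∈ Icc a b) :
    (√(C * (x - x₁) * (x₄ - x)))⁻¹ ∈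
      Icc (√(C * (b - x₁) * (x₄ - a)))⁻¹ (√(C * (a - x₁) * (x₄ - b)))⁻¹ := by
  obtain ⟨hax, hxb⟩ := hx
  have hlow : 0 < C * (a - x₁) * (x₄ - b) := by
    have : 0 < a - x₁ := by linarith
    have : 0 < x₄ - b := by linarith
    positivity
  have hmid : C * (a - x₁) * (x₄ - b) ≤ C * (x - x₁) * (x₄ - x) :=
    mul_le_mul (by gcongr) (by linarith) (by linarith) (mul_nonneg hC.le (by linarith))
  have hhigh : C * (x - x₁) * (x₄ - x) ≤ C * (b - x₁) * (x₄ - a) :=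
    mul_le_mul (by gcongr) (by linarith) (by linarith) (mul_nonneg hC.le (by linarith))
  exact ⟨inv_anti₀ (sqrt_pos.2 (hlow.trans_le hmid)) (sqrt_le_sqrt hhigh),
    inv_anti₀ (sqrt_pos.2 hlow) (sqrt_le_sqrt hmid)⟩

theorem integral_inv_sqrt_quartic_mem_Icc (hC : 0 < C) (h₁ : x₁ < a) (hab : a < b) (h₄ : b < x₄) :
    ∫ x in a..b, 1 / √(C * (x - x₁) * (x - a) * (b - x) * (x₄ - x)) ∈
      Icc ((√(C * (b - x₁) * (x₄ - a)))⁻¹ * π) ((√(C * (a - x₁) * (x₄ - b)))⁻¹ * π) := by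
  have hsub : uIcc a b ⊆ Icc x₁ x₄ := by
    rw [uIcc_of_le hab.le]; exact Icc_subset_Icc h₁.le h₄.le
  rw [integral_congr fun x hx => inv_sqrt_quartic_eq_mul hC (hsub hx)]
  refine integral_mul_inv_sqrt_mul_sub_mem_Icc hab (fun x hx => ?_)
    (fun x hx => (inv_sqrt_quadratic_mem_Icc hC h₁ h₄ hx).1)
    (fun x hx => (inv_sqrt_quadratic_mem_Icc hC h₁ h₄ hx).2)
  refine ContinuousAt.continuousWithinAt (ContinuousAt.inv₀ (by fun_prop) (sqrt_ne_zero'.2 ?_))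
  exact mul_pos (mul_pos hC (by linarith [hx.1])) (by linarith [hx.2])

end QuarticPeriod

/-- as `(x₂, x₃) → (1, 1)` with `x₁ < x₂ < x₃ < x₄`, the elliptic integral
`∫_{x₂}^{x₃} dx/√(C(x-x₁)(x-x₂)(x₃-x)(x₄-x))` converges to `π/√(C(x₄-1)(1-x₁))`. -/
theorem period_omega2_degenerates (C x₁ x₄ : ℝ) (hC : 0 < C) (hx1 : x₁ < 1) (hx4 : 1 < x₄) :
    Tendsto
      (fun q : ℝ × ℝ =>
        ∫ x in q.1..q.2, 1 / Real.sqrt (C * (x - x₁) * (x - q.1) * (q.2 - x) * (x₄ - x)))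
      (nhdsWithin ((1 : ℝ), (1 : ℝ)) {q : ℝ × ℝ | x₁ < q.1 ∧ q.1 < q.2 ∧ q.2 < x₄})
      (nhds (π / Real.sqrt (C * (x₄ - 1) * (1 - x₁)))) := by
  set bound : ℝ × ℝ → ℝ := fun p => (√(C * (p.1 - x₁) * (x₄ - p.2)))⁻¹ * π
  have hbound : Tendsto bound (𝓝 (1, 1)) (𝓝 (π / √(C * (x₄ - 1) * (1 - x₁)))) := by
    have hpos : 0 < C * (1 - x₁) * (x₄ - 1) := mul_pos (mul_pos hC (by linarith)) (by linarith)
    have hcont : ContinuousAt bound (1, 1) :=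
      (ContinuousAt.inv₀ (f := fun p : ℝ × ℝ => √(C * (p.1 - x₁) * (x₄ - p.2))) (by fun_prop)
        (sqrt_ne_zero'.2 hpos)).mul continuousAt_const
    convert hcont.tendsto using 2
    simp only [bound]
    rw [div_eq_inv_mul, mul_right_comm]
  have hswap : Tendsto Prod.swap (𝓝[{q : ℝ × ℝ | x₁ < q.1 ∧ q.1 < q.2 ∧ q.2 < x₄}] (1, 1))
      (𝓝 ((1 : ℝ), (1 : ℝ))) :=
    (continuous_swap.tendsto (1, 1)).mono_left nhdsWithin_le_nhds
  refine tendsto_of_tendsto_of_tendsto_of_le_of_le' (hbound.comp hswap)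
    (hbound.mono_left nhdsWithin_le_nhds) ?_ ?_ <;>
  filter_upwards [self_mem_nhdsWithin] with q ⟨h₁, hab, h₄⟩
  exacts [(integral_inv_sqrt_quartic_mem_Icc hC h₁ hab h₄).1,
    (integral_inv_sqrt_quartic_mem_Icc hC h₁ hab h₄).2]
end
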